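/- arXiv:2510.07450 — 6 statements merged into one kernel-verified Lean document; each statement's English description precedes it below -/
import Mathlib

section
/- Let δ ∈ [0,1) and let (u_n) be a sequence of positive reals such that u_{n+1}/u_n ≥ 1 + c·n^{-δ} for all n, for some c ∈ (0,1). Then there exists β > 1 such that for all n, d ∈ ℕ, u_{n+d}/u_n ≥ β^{d/(n+d)^δ}. -/
/-!
For `n ≤ k < n + d` the `k`-th step multiplies `u` by at least
`1 + c k^{-δ} ≥ exp (c k^{-δ} / 2) ≥ exp (c (n + d)^{-δ} / 2)`,
using `exp y ≤ 1 / (1 - y)` at `y = c k^{-δ} / 2 ≤ 1 / 2`.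
So the `d` steps from `n` to `n + d` multiply it by at least `exp (c / 2) ^ (d / (n + d)^δ)`.
-/

open Real

theorem Real.exp_half_le_one_add {x : ℝ} (hx0 : 0 ≤ x) (hx1 : x ≤ 1) :
    exp (x / 2) ≤ 1 + x := by
  have hpos : 0 < 1 - x / 2 := by linarith
  calc exp (x / 2) ≤ 1 / (1 - x / 2) :=
        exp_bound_div_one_sub_of_interval (by linarith) (by linarith)
    _ ≤ 1 + x := by rw [div_le_iff₀ hpos]; nlinarith

theorem exp_mul_le_div_of_exp_le_step {u : ℕ → ℝ} (hu : ∀ k, 0 < u k) {s : ℝ} {n d : ℕ}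
    (hstep : ∀ k, n ≤ k → k < n + d → exp s ≤ u (k + 1) / u k) :
    exp (s * d) ≤ u (n + d) / u n := by
  induction d with
  | zero => simp [(hu n).ne']
  | succ d ih =>
    have hprev := ih fun k hnk hk => hstep k hnk (by omega)
    have hlast := hstep (n + d) le_self_add (by omega)
    calc exp (s * (d + 1 : ℕ)) = exp (s * d) * exp s := by push_cast; rw [← exp_add]; ring_nf
      _ ≤ u (n + d) / u n * (u (n + d + 1) / u (n + d)) :=
          mul_le_mul hprev hlast (exp_pos _).le (hprev.trans' (exp_pos _).le)
      _ = u (n + (d + 1)) / u n := by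
          rw [← add_assoc]; field_simp [(hu n).ne', (hu (n + d)).ne']

/-- If `δ ∈ [0,1)` and `(u_n)` is a sequence of positive reals with
`u_{n+1}/u_n ≥ 1 + c n^{-δ}` for all `n ≥ 1` (some `c ∈ (0,1)`), then there is
`β > 1` with `u_{n+d}/u_n ≥ β^{d/(n+d)^δ}` for all `n ≥ 1`, `d ∈ ℕ`. -/
theorem sublacunary_growth (δ : ℝ) (hδ : δ ∈ Set.Ico (0:ℝ) 1)
    (u : ℕ → ℝ) (hu : ∀ n, 0 < u n)
    (c : ℝ) (hc : c ∈ Set.Ioo (0:ℝ) 1)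
    (hsub : ∀ n : ℕ, 1 ≤ n → u (n + 1) / u n ≥ 1 + c * (n : ℝ) ^ (-δ)) :
    ∃ β : ℝ, 1 < β ∧ ∀ n : ℕ, 1 ≤ n → ∀ d : ℕ,
      u (n + d) / u n ≥ β ^ ((d : ℝ) / ((n : ℝ) + (d : ℝ)) ^ δ) := by
  obtain ⟨hδ0, -⟩ := hδ
  obtain ⟨hc0, hc1⟩ := hc
  refine ⟨exp (c / 2), one_lt_exp_iff.mpr (by positivity), fun n hn d => ?_⟩
  have hstep (k : ℕ) (hnk : n ≤ k) (hk : k < n + d) :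
      exp (c / 2 / ((n : ℝ) + d) ^ δ) ≤ u (k + 1) / u k := by
    have hk1 : (1 : ℝ) ≤ k := by exact_mod_cast hn.trans hnk
    have hkδ : (k : ℝ) ^ (-δ) ≤ 1 := rpow_le_one_of_one_le_of_nonpos hk1 (by linarith)
    have hmono : (k : ℝ) ^ δ ≤ ((n : ℝ) + d) ^ δ :=
      rpow_le_rpow (by positivity) (by exact_mod_cast hk.le) hδ0
    calc exp (c / 2 / ((n : ℝ) + d) ^ δ) ≤ exp (c * (k : ℝ) ^ (-δ) / 2) := by
          rw [exp_le_exp, rpow_neg (by positivity), div_right_comm, ← div_eq_mul_inv]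
          gcongr
      _ ≤ 1 + c * (k : ℝ) ^ (-δ) :=
          exp_half_le_one_add (by positivity) (mul_le_one₀ hc1.le (by positivity) hkδ)
      _ ≤ u (k + 1) / u k := hsub k (hn.trans hnk)
  rw [← exp_mul, ge_iff_le]
  convert exp_mul_le_div_of_exp_le_step hu hstep using 2
  ring
end

section
/- Let a ∈ (0,1), let (u_n) be an increasing sequence of reals with u_1 ≥ 1, and let (I_n) be subintervals of [0,1] with λ(I_n) = n^{-a}. Set X_n(y) = 1 if frac(u_n y) ∈ I_n and 0 otherwise, and σ_n = E(X_n) (expectation with respect to Lebesgue measure on [0,1]). Then there exists a constant C > 0 such that for all n < m, |Cov(X_n, X_m)| ≤ C · m^{-a} · (u_n/u_m + 1/u_n). -/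
open MeasureTheory Filter

/-- The indicator random variable `X_n(y) = 1_{I}(frac(u y))`. -/
noncomputable def Xv (I : Set ℝ) (u y : ℝ) : ℝ :=
  I.indicator (fun _ => (1:ℝ)) (Int.fract (u * y))

/-!
On each period `[k/u, (k+1)/u]`, `Xv (Icc p q) u` is the indicator of a subinterval of length
`(q - p)/u`. Hence its integral over any interval `[c, d]` is `(d - c)(q - p)` up to the
integral over one period, `(q - p)/u`. For `n < m`, the interval `[0, 1]` consists of `⌊u_n⌋`
full periods of `X_n` and a leftover piece of length `< 1/u_n`. On each full period, `X_n X_m`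
integrates `X_m` over an interval of length `λ_n/u_n`, which gives `λ_n λ_m/u_n` up to an error
of `λ_m/u_m`. Summing gives `E(X_n X_m) = λ_n λ_m + O(λ_m (u_n/u_m + 1/u_n))`, while
`σ_n σ_m = λ_n λ_m + O(λ_m/u_n)`.
-/

open Set intervalIntegral

theorem Function.Periodic.abs_intervalIntegral_sub_le {f : ℝ → ℝ} {T : ℝ}
    (hf : Function.Periodic f T) (hT : 0 < T) (hf0 : 0 ≤ f)
    (h_int : ∀ t₁ t₂, IntervalIntegrable f volume t₁ t₂) (c d : ℝ) :
    |(∫ x in c..d, f x) - (d - c) / T * ∫ x in 0..T, f x| ≤ ∫ x in 0..T, f x := by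
  set J := ∫ x in 0..T, f x
  set k := ⌊(d - c) / T⌋
  set θ := Int.fract ((d - c) / T)
  set s := c + k • T
  have hd : d = s + θ * T := by
    have := Int.fract_div_mul_self_add_zsmul_eq T (d - c) hT.ne'
    simp only [s, θ, k]
    linarith
  have hθ₀ : 0 ≤ θ := Int.fract_nonneg _
  have hθ₁ : θ < 1 := Int.fract_lt_one _
  have hsd : s ≤ d := by rw [hd]; nlinarith
  have hJ : 0 ≤ J := integral_nonneg hT.le fun x _ => hf0 x
  have hfull : ∫ x in c..s, f x = k * J := by
    rw [hf.intervalIntegral_add_zsmul_eq k c h_int, hf.intervalIntegral_add_eq c 0, zero_add,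
      zsmul_eq_mul]
  have hrest₀ : 0 ≤ ∫ x in s..d, f x := integral_nonneg hsd fun x _ => hf0 x
  have hrest₁ : ∫ x in s..d, f x ≤ J :=
    calc ∫ x in s..d, f x ≤ ∫ x in s..s + T, f x :=
          integral_mono_interval le_rfl hsd (by rw [hd]; nlinarith) (ae_of_all _ hf0) (h_int _ _)
      _ = J := by rw [hf.intervalIntegral_add_eq s 0, zero_add]
  rw [← integral_add_adjacent_intervals (h_int c s) (h_int s d), hfull,
    ← Int.floor_add_fract ((d - c) / T), abs_le]
  constructor <;> nlinarith

theorem measurable_Xv {I : Set ℝ} (hI : MeasurableSet I) (u : ℝ) : Measurable (Xv I u) :=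
  (measurable_const.indicator hI).comp (measurable_fract.comp (measurable_const_mul u))

theorem Xv_nonneg (I : Set ℝ) (u : ℝ) : 0 ≤ Xv I u :=
  fun _ => indicator_nonneg (fun _ _ => zero_le_one) _

theorem Xv_le_one (I : Set ℝ) (u y : ℝ) : Xv I u y ≤ 1 :=
  indicator_le_self' (fun _ _ => zero_le_one) _

theorem periodic_Xv (I : Set ℝ) {u : ℝ} (hu : u ≠ 0) : Function.Periodic (Xv I u) u⁻¹ := by
  intro y
  simp only [Xv, mul_add, mul_inv_cancel₀ hu, Int.fract_add_one]

theorem intervalIntegrable_Xv {I : Set ℝ} (hI : MeasurableSet I) (u a b : ℝ) :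
    IntervalIntegrable (Xv I u) volume a b := by
  refine (intervalIntegrable_const (c := (1 : ℝ))).mono_fun
    (measurable_Xv hI u).aestronglyMeasurable (ae_of_all _ fun y => ?_)
  simpa [abs_of_nonneg (Xv_nonneg I u y)] using Xv_le_one I u y

theorem Xv_eq_indicator_sub {I : Set ℝ} {u y : ℝ} {k : ℤ}
    (hy : u * y ∈ Ico (k : ℝ) (k + 1)) :
    Xv I u y = I.indicator (fun _ => 1) (u * y - k) := by
  rw [Xv, ← Int.self_sub_floor, Int.floor_eq_iff.2 hy]

theorem intervalIntegrable_Xv_mul {I : Set ℝ} (hI : MeasurableSet I) (u : ℝ) {g : ℝ → ℝ}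
    (hg : ∀ c d, IntervalIntegrable g volume c d) (c d : ℝ) :
    IntervalIntegrable (fun y => Xv I u y * g y) volume c d := by
  refine (hg c d).mono_fun ((measurable_Xv hI u).aestronglyMeasurable.mul
    (hg c d).aestronglyMeasurable_restrict_uIoc) (ae_of_all _ fun y => ?_)
  simp only [norm_mul, Real.norm_eq_abs, abs_of_nonneg (Xv_nonneg I u y)]
  exact mul_le_of_le_one_left (abs_nonneg _) (Xv_le_one I u y)

theorem integral_Xv_Icc_mul_period {u p q : ℝ} (hu : 0 < u) (hp : 0 ≤ p) (hpq : p ≤ q)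
    (hq : q ≤ 1) {g : ℝ → ℝ} (hg : ∀ c d, IntervalIntegrable g volume c d) (k : ℕ) :
    ∫ y in k / u..(k + 1) / u, Xv (Icc p q) u y * g y =
      ∫ y in (k + p) / u..(k + q) / u, g y := by
  have hXg := intervalIntegrable_Xv_mul (measurableSet_Icc (a := p) (b := q)) u hg
  have hX : ∀ y, u * y ∈ Ioo (k : ℝ) (k + 1) →
      Xv (Icc p q) u y = (Icc p q).indicator (fun _ => 1) (u * y - k) := fun y hy =>
    Xv_eq_indicator_sub (k := k) (by exact_mod_cast Ioo_subset_Ico_self hy)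
  have hdiv : ∀ {a b : ℝ}, a ≤ b → a / u ≤ b / u :=
    fun h => div_le_div_of_nonneg_right h hu.le
  have hleft : ∫ y in k / u..(k + p) / u, Xv (Icc p q) u y * g y = 0 := by
    rw [integral_congr_Ioo_of_le (hdiv (by linarith)) (g := fun _ => 0),
      intervalIntegral.integral_zero]
    intro y hy
    rw [← preimage_const_mul_Ioo₀ _ _ hu, mem_preimage] at hy
    dsimp only
    rw [hX y ⟨hy.1, by linarith [hy.2]⟩,
      indicator_of_notMem (fun h => by linarith [h.1, hy.2]), zero_mul]
  have hmid : ∫ y in (k + p) / u..(k + q) / u, Xv (Icc p q) u y * g y =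
      ∫ y in (k + p) / u..(k + q) / u, g y := by
    refine integral_congr_Ioo_of_le (hdiv (by linarith)) fun y hy => ?_
    rw [← preimage_const_mul_Ioo₀ _ _ hu, mem_preimage] at hy
    have hmem : u * y - k ∈ Icc p q := ⟨by linarith [hy.1], by linarith [hy.2]⟩
    rw [hX y ⟨by linarith [hy.1], by linarith [hy.2]⟩, indicator_of_mem hmem, one_mul]
  have hright : ∫ y in (k + q) / u..(k + 1) / u, Xv (Icc p q) u y * g y = 0 := by
    rw [integral_congr_Ioo_of_le (hdiv (by linarith)) (g := fun _ => 0),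
      intervalIntegral.integral_zero]
    intro y hy
    rw [← preimage_const_mul_Ioo₀ _ _ hu, mem_preimage] at hy
    dsimp only
    rw [hX y ⟨by linarith [hy.1], hy.2⟩,
      indicator_of_notMem (fun h => by linarith [h.2, hy.1]), zero_mul]
  rw [← integral_add_adjacent_intervals (hXg _ ((k + p) / u)) (hXg _ _),
    ← integral_add_adjacent_intervals (hXg ((k + p) / u) ((k + q) / u)) (hXg _ _),
    hleft, hmid, hright, zero_add, add_zero]

theorem integral_Xv_Icc_period {u p q : ℝ} (hu : 0 < u) (hp : 0 ≤ p) (hpq : p ≤ q)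
    (hq : q ≤ 1) : ∫ y in (0 : ℝ)..u⁻¹, Xv (Icc p q) u y = (q - p) / u := by
  simpa [sub_div] using integral_Xv_Icc_mul_period hu hp hpq hq
    (fun _ _ => intervalIntegrable_const (c := (1 : ℝ))) 0

theorem abs_integral_Xv_Icc_sub_le {u p q : ℝ} (hu : 0 < u) (hp : 0 ≤ p) (hpq : p ≤ q)
    (hq : q ≤ 1) (c d : ℝ) :
    |(∫ y in c..d, Xv (Icc p q) u y) - (d - c) * (q - p)| ≤ (q - p) / u := by
  have h := (periodic_Xv (Icc p q) hu.ne').abs_intervalIntegral_sub_le (inv_pos.2 hu)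
    (Xv_nonneg _ u) (intervalIntegrable_Xv measurableSet_Icc u) c d
  rwa [integral_Xv_Icc_period hu hp hpq hq, div_inv_eq_mul,
    show (d - c) * u * ((q - p) / u) = (d - c) * (q - p) by field_simp] at h

theorem abs_integral_Xv_Icc_mul_periods_sub_le {u p q μ ε : ℝ} (hu : 0 < u) (hp : 0 ≤ p)
    (hpq : p ≤ q) (hq : q ≤ 1) {g : ℝ → ℝ} (hg : ∀ c d, IntervalIntegrable g volume c d)
    (hgμ : ∀ c d, |(∫ y in c..d, g y) - (d - c) * μ| ≤ ε) (K : ℕ) :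
    |(∫ y in (0 : ℝ)..K / u, Xv (Icc p q) u y * g y) - K * ((q - p) / u * μ)| ≤ K * ε := by
  have hsplit : ∫ y in (0 : ℝ)..K / u, Xv (Icc p q) u y * g y =
      ∑ k ∈ Finset.range K, ∫ y in (k + p) / u..(k + q) / u, g y := by
    have h := sum_integral_adjacent_intervals (a := fun k : ℕ => (k : ℝ) / u) (n := K)
      fun k _ => intervalIntegrable_Xv_mul (measurableSet_Icc (a := p) (b := q)) u hg _ _
    simp only [Nat.cast_zero, zero_div, Nat.cast_succ] at h
    rw [← h]
    exact Finset.sum_congr rfl fun k _ => integral_Xv_Icc_mul_period hu hp hpq hq hg k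
  calc |(∫ y in (0 : ℝ)..K / u, Xv (Icc p q) u y * g y) - K * ((q - p) / u * μ)|
      = |∑ k ∈ Finset.range K,
          ((∫ y in (k + p) / u..(k + q) / u, g y) - (q - p) / u * μ)| := by
        rw [hsplit, Finset.sum_sub_distrib, Finset.sum_const, Finset.card_range, nsmul_eq_mul]
    _ ≤ ∑ k ∈ Finset.range K, |(∫ y in (k + p) / u..(k + q) / u, g y) - (q - p) / u * μ| :=
        Finset.abs_sum_le_sum_abs _ _
    _ ≤ ∑ _k ∈ Finset.range K, ε := Finset.sum_le_sum fun k _ => by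
        simpa only [← sub_div, add_sub_add_left_eq_sub] using hgμ ((k + p) / u) ((k + q) / u)
    _ = K * ε := by rw [Finset.sum_const, Finset.card_range, nsmul_eq_mul]

theorem abs_integral_Xv_Icc_mul_sub_le {u p q μ ε : ℝ} (hu : 0 < u) (hp : 0 ≤ p)
    (hpq : p ≤ q) (hq : q ≤ 1) {g : ℝ → ℝ} (hg0 : 0 ≤ g)
    (hg : ∀ c d, IntervalIntegrable g volume c d) (hμ : 0 ≤ μ)
    (hgμ : ∀ c d, |(∫ y in c..d, g y) - (d - c) * μ| ≤ ε) :
    |(∫ y in (0 : ℝ)..1, Xv (Icc p q) u y * g y) - (q - p) * μ| ≤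
      2 * μ / u + (u + 1) * ε := by
  set K := ⌊u⌋₊
  have hε : 0 ≤ ε := (abs_nonneg _).trans (hgμ 0 0)
  have hKu : (K : ℝ) ≤ u := Nat.floor_le hu.le
  have hK₁ : (K : ℝ) / u ≤ 1 := div_le_one_of_le₀ hKu hu.le
  have hgap : (1 - K / u) * μ ≤ μ / u := by
    rw [one_sub_div hu.ne', div_mul_eq_mul_div]
    gcongr
    nlinarith [Nat.lt_floor_add_one u]
  have hXg := intervalIntegrable_Xv_mul (measurableSet_Icc (a := p) (b := q)) u hg
  have hfull := abs_integral_Xv_Icc_mul_periods_sub_le hu hp hpq hq hg hgμ K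
  have hrest₀ : 0 ≤ ∫ y in K / u..1, Xv (Icc p q) u y * g y :=
    integral_nonneg hK₁ fun y _ => mul_nonneg (Xv_nonneg _ u y) (hg0 y)
  have hrest₁ : ∫ y in K / u..1, Xv (Icc p q) u y * g y ≤ (1 - K / u) * μ + ε :=
    calc ∫ y in K / u..1, Xv (Icc p q) u y * g y ≤ ∫ y in K / u..1, g y :=
          integral_mono_on hK₁ (hXg _ 1) (hg _ 1) fun y _ =>
            mul_le_of_le_one_left (hg0 y) (Xv_le_one _ u y)
      _ ≤ (1 - K / u) * μ + ε := by linarith [(abs_le.1 (hgμ (K / u) 1)).2]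
  have hshort : 0 ≤ (q - p) * μ - K * ((q - p) / u * μ) ∧
      (q - p) * μ - K * ((q - p) / u * μ) ≤ μ / u := by
    have h : (q - p) * μ - K * ((q - p) / u * μ) = (q - p) * ((1 - K / u) * μ) := by ring
    have hgap₀ : 0 ≤ 1 - K / u := by linarith
    rw [h]
    exact ⟨by positivity, (mul_le_of_le_one_left (by positivity) (by linarith)).trans hgap⟩
  have hKε : (K : ℝ) * ε ≤ u * ε := mul_le_mul_of_nonneg_right hKu hε
  rw [← integral_add_adjacent_intervals (hXg 0 (K / u)) (hXg _ 1),
    show 2 * μ / u + (u + 1) * ε = 2 * (μ / u) + u * ε + ε by ring]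
  rw [abs_le] at hfull ⊢
  constructor <;> linarith

theorem abs_integral_Xv_Icc_mul_integral_sub_le {u v p q p' q' : ℝ} (hu : 1 ≤ u)
    (huv : u ≤ v) (hp : 0 ≤ p) (hpq : p ≤ q) (hq : q ≤ 1) (hp' : 0 ≤ p')
    (hpq' : p' ≤ q') (hq' : q' ≤ 1) :
    |(∫ y in (0 : ℝ)..1, Xv (Icc p q) u y) * (∫ y in (0 : ℝ)..1, Xv (Icc p' q') v y) -
        (q - p) * (q' - p')| ≤ 3 * ((q' - p') / u) := by
  have hu₀ : 0 < u := one_pos.trans_le hu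
  set σ := ∫ y in (0 : ℝ)..1, Xv (Icc p q) u y
  set σ' := ∫ y in (0 : ℝ)..1, Xv (Icc p' q') v y
  have hσ : |σ - (q - p)| ≤ (q - p) / u := by
    simpa using abs_integral_Xv_Icc_sub_le hu₀ hp hpq hq 0 1
  have hσ' : |σ' - (q' - p')| ≤ (q' - p') / u := by
    have h := abs_integral_Xv_Icc_sub_le (hu₀.trans_le huv) hp' hpq' hq' 0 1
    simp only [sub_zero, one_mul] at h
    exact h.trans (by gcongr)
  have hσ'₀ : 0 ≤ σ' :=
    intervalIntegral.integral_nonneg zero_le_one fun y _ => Xv_nonneg _ v y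
  have hσ'₁ : σ' ≤ 2 * (q' - p') := by
    have := div_le_self (sub_nonneg.2 hpq') hu
    linarith [(abs_le.1 hσ').2]
  calc |σ * σ' - (q - p) * (q' - p')|
        = |(σ - (q - p)) * σ' + (q - p) * (σ' - (q' - p'))| := by ring_nf
    _ ≤ |σ - (q - p)| * σ' + (q - p) * |σ' - (q' - p')| := by
        refine (abs_add_le _ _).trans_eq ?_
        rw [abs_mul, abs_mul, abs_of_nonneg hσ'₀, abs_of_nonneg (sub_nonneg.2 hpq)]
    _ ≤ 1 / u * (2 * (q' - p')) + 1 * ((q' - p') / u) := by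
        gcongr
        · exact hσ.trans (by gcongr; linarith)
        · linarith
    _ = 3 * ((q' - p') / u) := by ring

theorem abs_covariance_Xv_Icc_le {u v p q p' q' : ℝ} (hu : 1 ≤ u) (huv : u ≤ v) (hp : 0 ≤ p)
    (hpq : p ≤ q) (hq : q ≤ 1) (hp' : 0 ≤ p') (hpq' : p' ≤ q') (hq' : q' ≤ 1) :
    |(∫ y in (0 : ℝ)..1, Xv (Icc p q) u y * Xv (Icc p' q') v y) -
        (∫ y in (0 : ℝ)..1, Xv (Icc p q) u y) * ∫ y in (0 : ℝ)..1, Xv (Icc p' q') v y|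
      ≤ 6 * (q' - p') * (u / v + 1 / u) := by
  have hu₀ : 0 < u := one_pos.trans_le hu
  have hv₀ : 0 < v := hu₀.trans_le huv
  have hE := abs_integral_Xv_Icc_mul_sub_le hu₀ hp hpq hq (Xv_nonneg _ v)
    (intervalIntegrable_Xv measurableSet_Icc v) (sub_nonneg.2 hpq')
    (abs_integral_Xv_Icc_sub_le hv₀ hp' hpq' hq')
  have hσσ' := abs_integral_Xv_Icc_mul_integral_sub_le hu huv hp hpq hq hp' hpq' hq'
  have hvu : (q' - p') / v ≤ (q' - p') / u := by gcongr
  have hlen : 0 ≤ (q' - p') * (u / v) := by have := sub_nonneg.2 hpq'; positivity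
  rw [show 2 * (q' - p') / u + (u + 1) * ((q' - p') / v) =
    2 * ((q' - p') / u) + (q' - p') * (u / v) + (q' - p') / v by ring] at hE
  rw [show 6 * (q' - p') * (u / v + 1 / u) = 6 * ((q' - p') * (u / v)) + 6 * ((q' - p') / u) by
    ring]
  rw [abs_le] at hE hσσ' ⊢
  constructor <;> linarith

theorem le_and_sub_eq_of_volume_Icc_eq_ofReal {p q ℓ : ℝ} (hℓ : 0 < ℓ)
    (h : volume (Icc p q) = ENNReal.ofReal ℓ) : p ≤ q ∧ q - p = ℓ := by
  have hpq : p ≤ q := by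
    by_contra hqp
    rw [Icc_eq_empty hqp, measure_empty, eq_comm, ENNReal.ofReal_eq_zero] at h
    linarith
  rw [Real.volume_Icc, ENNReal.ofReal_eq_ofReal_iff (sub_nonneg.2 hpq) hℓ.le] at h
  exact ⟨hpq, h⟩

theorem covariance_bound_general (a : ℝ)
    (u : ℕ → ℝ) (humono : StrictMono u) (hu1 : 1 ≤ u 1)
    (I : ℕ → Set ℝ) (hIsub : ∀ n, I n ⊆ Set.Icc (0:ℝ) 1)
    (hIint : ∀ n : ℕ, 1 ≤ n → ∃ p q : ℝ, I n = Set.Icc p q)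
    (hIvol : ∀ n : ℕ, 1 ≤ n → volume (I n) = ENNReal.ofReal ((n:ℝ) ^ (-a))) :
    ∃ C : ℝ, 0 < C ∧ ∀ n m : ℕ, 1 ≤ n → n < m →
      |(∫ y in Set.Icc (0:ℝ) 1, Xv (I n) (u n) y * Xv (I m) (u m) y) -
        (∫ y in Set.Icc (0:ℝ) 1, Xv (I n) (u n) y) *
        (∫ y in Set.Icc (0:ℝ) 1, Xv (I m) (u m) y)|
      ≤ C * (m:ℝ) ^ (-a) * (u n / u m + 1 / u n) := by
  have hIcc : ∀ n, 1 ≤ n →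
      ∃ p q, I n = Icc p q ∧ 0 ≤ p ∧ p ≤ q ∧ q ≤ 1 ∧ q - p = (n : ℝ) ^ (-a) := by
    intro n hn
    obtain ⟨p, q, hI⟩ := hIint n hn
    obtain ⟨hpq, hlen⟩ := le_and_sub_eq_of_volume_Icc_eq_ofReal
      (Real.rpow_pos_of_pos (by exact_mod_cast hn) _) (hI ▸ hIvol n hn)
    obtain ⟨hp, hq⟩ := (Icc_subset_Icc_iff hpq).1 (hI ▸ hIsub n)
    exact ⟨p, q, hI, hp, hpq, hq, hlen⟩
  refine ⟨6, by norm_num, fun n m hn hnm => ?_⟩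
  obtain ⟨p, q, hIn, hp, hpq, hq, -⟩ := hIcc n hn
  obtain ⟨p', q', hIm, hp', hpq', hq', hlen'⟩ := hIcc m (hn.trans hnm.le)
  simp only [integral_Icc_eq_integral_Ioc, ← intervalIntegral.integral_of_le zero_le_one,
    hIn, hIm, ← hlen']
  exact abs_covariance_Xv_Icc_le (hu1.trans (humono.monotone hn)) (humono hnm).le
    hp hpq hq hp' hpq' hq'

/-- covariance bound `|Cov(X_n, X_m)| ≤ C m^{-a}(u_n/u_m + 1/u_n)`
for `n < m`, where expectations are over Lebesgue measure on `[0,1]`. -/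
theorem covariance_bound (a : ℝ) (ha : a ∈ Set.Ioo (0:ℝ) 1)
    (u : ℕ → ℝ) (humono : StrictMono u) (hu1 : 1 ≤ u 1)
    (I : ℕ → Set ℝ) (hIsub : ∀ n, I n ⊆ Set.Icc (0:ℝ) 1)
    (hIint : ∀ n : ℕ, 1 ≤ n → ∃ p q : ℝ, I n = Set.Icc p q)
    (hIvol : ∀ n : ℕ, 1 ≤ n → volume (I n) = ENNReal.ofReal ((n:ℝ) ^ (-a))) :
    ∃ C : ℝ, 0 < C ∧ ∀ n m : ℕ, 1 ≤ n → n < m →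
      |(∫ y in Set.Icc (0:ℝ) 1, Xv (I n) (u n) y * Xv (I m) (u m) y) -
        (∫ y in Set.Icc (0:ℝ) 1, Xv (I n) (u n) y) *
        (∫ y in Set.Icc (0:ℝ) 1, Xv (I m) (u m) y)|
      ≤ C * (m:ℝ) ^ (-a) * (u n / u m + 1 / u n) :=
  covariance_bound_general a u humono hu1 I hIsub hIint hIvol
end

section
/- Let A ⊆ ℕ and a ∈ (0,1), and set γ̄ = max{0, dim̄_M(A) − a}, where dim̄_M(A) = limsup_{N→∞} log|A ∩ [1,N]| / log N is the upper mass dimension. Then for every γ > γ̄, lim_{N→∞} N^{-γ} ∑_{n=1}^N n^{-a} 1_A(n) = 0, and for every 0 < γ < γ̄, limsup_{N→∞} N^{-γ} ∑_{n=1}^N n^{-a} 1_A(n) = +∞. -/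
open Filter

/-- Upper mass dimension of a set of naturals:
`limsup_N log|A ∩ [1,N]| / log N`. -/
noncomputable def upperMassDim (A : Set ℕ) : ℝ :=
  Filter.limsup (fun N : ℕ => Real.log ((A ∩ Set.Icc 1 N).ncard : ℝ) / Real.log N) atTop

/-!
Write `c(N) = |A ∩ [1, N]|` and `S(N) = ∑_{n ∈ A, n ≤ N} n^{-a}`. If `dim̄_M A < δ + a`, then
`c(N) ≤ K N^{δ+a}` for all `N`; splitting `A ∩ [1, N]` at `N / 2` gives
`S(N) ≤ S(N / 2) + 2^a K N^δ`, and this recursion yields `S(N) ≤ D N^δ = o(N^γ)` for `δ < γ`.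
If instead `γ + a < c < dim̄_M A`, then `c(N) > N^c` for infinitely many `N`, and for those
`S(N) ≥ N^{-a} c(N) > N^{γ} · N^{c - a - γ}`, where the last factor tends to infinity.
-/

open Finset Real

lemma le_rpow_of_log_div_log_lt {x y β : ℝ} (hx : 0 ≤ x) (hy : 1 < y) (h : log x / log y < β) :
    x ≤ y ^ β := by
  rcases hx.eq_or_lt with rfl | hx
  · exact rpow_nonneg (by linarith) β
  rw [div_lt_iff₀ (log_pos hy)] at h
  exact ((lt_rpow_iff_log_lt hx (by linarith)).2 h).le

lemma natCast_rpow_lt_of_lt_log_div_log {x c : ℝ} {N : ℕ} (hx : 0 ≤ x) (hc : 0 < c)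
    (h : c < log x / log N) : (N : ℝ) ^ c < x := by
  have hlogN : 0 < log N := (log_natCast_nonneg N).lt_of_ne fun h0 => by
    rw [← h0, div_zero] at h; linarith
  have hN : (0 : ℝ) < N := Nat.cast_pos.2 (Nat.pos_of_ne_zero fun h0 => by simp [h0] at hlogN)
  rw [lt_div_iff₀ hlogN] at h
  have hx : 0 < x := hx.lt_of_ne fun h0 => by
    rw [← h0, log_zero] at h; linarith [mul_pos hc hlogN]
  exact (rpow_lt_iff_lt_log hN hx).2 h

open Classical in
noncomputable def upTo (A : Set ℕ) (N : ℕ) : Finset ℕ := {n ∈ Icc 1 N | n ∈ A}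

section
variable {A : Set ℕ}

lemma mem_upTo {n N : ℕ} : n ∈ upTo A N ↔ n ∈ A ∧ 1 ≤ n ∧ n ≤ N := by
  simp [upTo, and_comm]

lemma upTo_zero : upTo A 0 = ∅ := by
  ext n; simp [mem_upTo]; omega

lemma upTo_mono {M N : ℕ} (h : M ≤ N) : upTo A M ⊆ upTo A N := fun n hn => by
  rw [mem_upTo] at hn ⊢
  exact ⟨hn.1, hn.2.1, hn.2.2.trans h⟩

lemma card_upTo_le (N : ℕ) : #(upTo A N) ≤ N := by
  classical exact (card_filter_le _ _).trans (by simp)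

lemma ncard_inter_Icc_eq_card_upTo (N : ℕ) : (A ∩ Set.Icc 1 N).ncard = #(upTo A N) := by
  rw [← Set.ncard_coe_finset]
  congr 1
  ext n
  simp [mem_upTo]

lemma sum_Icc_mul_indicator_eq_sum_upTo (w : ℕ → ℝ) (N : ℕ) :
    ∑ n ∈ Icc 1 N, w n * A.indicator (fun _ => 1) n = ∑ n ∈ upTo A N, w n := by
  rw [upTo, sum_filter]
  refine sum_congr rfl fun n _ => ?_
  split_ifs with hn <;> simp [hn]

lemma eventually_card_upTo_le_rpow {β : ℝ} (h : upperMassDim A < β) :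
    ∀ᶠ N in atTop, (#(upTo A N) : ℝ) ≤ (N : ℝ) ^ β := by
  have hbdd : IsBoundedUnder (· ≤ ·) atTop
      (fun N : ℕ => log ((A ∩ Set.Icc 1 N).ncard : ℝ) / log N) := by
    refine isBoundedUnder_of ⟨1, fun N => div_le_one_of_le₀ ?_ (log_natCast_nonneg N)⟩
    rw [ncard_inter_Icc_eq_card_upTo]
    rcases (#(upTo A N)).eq_zero_or_pos with h0 | h0
    · simp [h0, log_natCast_nonneg]
    · exact log_le_log (by exact_mod_cast h0) (by exact_mod_cast card_upTo_le N)
  filter_upwards [eventually_lt_of_limsup_lt h hbdd, eventually_gt_atTop 1] with N hN hN1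
  rw [ncard_inter_Icc_eq_card_upTo] at hN
  exact le_rpow_of_log_div_log_lt (Nat.cast_nonneg _) (by exact_mod_cast hN1) hN

lemma frequently_rpow_lt_card_upTo {c : ℝ} (hc : 0 < c) (h : c < upperMassDim A) :
    ∃ᶠ N : ℕ in atTop, (N : ℝ) ^ c < #(upTo A N) := by
  have hcobdd : IsCoboundedUnder (· ≤ ·) atTop
      (fun N : ℕ => log ((A ∩ Set.Icc 1 N).ncard : ℝ) / log N) :=
    (isBoundedUnder_of ⟨0, fun N =>
      div_nonneg (log_natCast_nonneg _) (log_natCast_nonneg N)⟩).isCoboundedUnder_le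
  refine (frequently_lt_of_lt_limsup hcobdd h).mono fun N hN => ?_
  rw [ncard_inter_Icc_eq_card_upTo] at hN
  exact natCast_rpow_lt_of_lt_log_div_log (Nat.cast_nonneg _) hc hN

lemma exists_card_upTo_le_mul_rpow {β : ℝ} (hβ : 0 ≤ β)
    (h : ∀ᶠ N in atTop, (#(upTo A N) : ℝ) ≤ (N : ℝ) ^ β) :
    ∃ K : ℝ, 0 ≤ K ∧ ∀ N : ℕ, (#(upTo A N) : ℝ) ≤ K * (N : ℝ) ^ β := by
  obtain ⟨N₀, hN₀⟩ := eventually_atTop.1 h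
  refine ⟨N₀ + 1, by positivity, fun N => ?_⟩
  rcases N.eq_zero_or_pos with rfl | hN
  · simp only [upTo_zero, card_empty, Nat.cast_zero]; positivity
  have hNβ : 1 ≤ (N : ℝ) ^ β := one_le_rpow (by exact_mod_cast hN) hβ
  rcases le_total N₀ N with hle | hle
  · calc (#(upTo A N) : ℝ) ≤ (N : ℝ) ^ β := hN₀ N hle
      _ ≤ (N₀ + 1) * (N : ℝ) ^ β := le_mul_of_one_le_left (by positivity) (by linarith)
  · calc (#(upTo A N) : ℝ) ≤ N₀ + 1 := by
          have := card_upTo_le (A := A) N; exact_mod_cast this.trans (by omega)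
      _ ≤ (N₀ + 1) * (N : ℝ) ^ β := le_mul_of_one_le_right (by positivity) hNβ

lemma card_upTo_mul_rpow_neg_le_sum {a : ℝ} (ha : 0 ≤ a) (N : ℕ) :
    #(upTo A N) * (N : ℝ) ^ (-a) ≤ ∑ n ∈ upTo A N, (n : ℝ) ^ (-a) := by
  rw [← nsmul_eq_mul]
  refine card_nsmul_le_sum _ _ _ fun n hn => ?_
  obtain ⟨-, hn1, hnN⟩ := mem_upTo.1 hn
  exact rpow_le_rpow_of_nonpos (by exact_mod_cast hn1) (by exact_mod_cast hnN) (by linarith)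

lemma sum_upTo_sdiff_rpow_neg_le {a : ℝ} (ha : 0 ≤ a) (M N : ℕ) :
    ∑ n ∈ upTo A N \ upTo A M, (n : ℝ) ^ (-a) ≤ #(upTo A N) * ((M : ℝ) + 1) ^ (-a) := by
  calc ∑ n ∈ upTo A N \ upTo A M, (n : ℝ) ^ (-a)
      ≤ #(upTo A N \ upTo A M) • ((M : ℝ) + 1) ^ (-a) := by
        refine sum_le_card_nsmul _ _ _ fun n hn => ?_
        obtain ⟨hnN, hnM⟩ := mem_sdiff.1 hn
        obtain ⟨hnA, hn1, -⟩ := mem_upTo.1 hnN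
        have hMn : M + 1 ≤ n := by
          by_contra hlt
          exact hnM (mem_upTo.2 ⟨hnA, hn1, by omega⟩)
        exact rpow_le_rpow_of_nonpos (by positivity) (by exact_mod_cast hMn) (by linarith)
    _ ≤ #(upTo A N) * ((M : ℝ) + 1) ^ (-a) := by
        rw [nsmul_eq_mul]; gcongr; exact sdiff_subset

lemma sum_upTo_rpow_neg_le {a δ K : ℝ} (ha : 0 ≤ a) (hδ : 0 < δ) (hK : 0 ≤ K)
    (hcount : ∀ N : ℕ, (#(upTo A N) : ℝ) ≤ K * (N : ℝ) ^ (δ + a)) (N : ℕ) :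
    ∑ n ∈ upTo A N, (n : ℝ) ^ (-a) ≤ 2 ^ a * K / (1 - 2 ^ (-δ)) * (N : ℝ) ^ δ := by
  set D := 2 ^ a * K / (1 - 2 ^ (-δ))
  have h2δ : (2 : ℝ) ^ (-δ) < 1 := rpow_lt_one_of_one_lt_of_neg one_lt_two (by linarith)
  have hgap : 0 < 1 - (2 : ℝ) ^ (-δ) := sub_pos.2 h2δ
  have hD : 0 ≤ D := div_nonneg (by positivity) hgap.le
  have hDfix : D * 2 ^ (-δ) + 2 ^ a * K = D := by
    simp only [D]; field_simp [hgap.ne']; ring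
  induction N using Nat.strong_induction_on with
  | _ N ih =>
  rcases N.eq_zero_or_pos with rfl | hN
  · simp only [upTo_zero, sum_empty, Nat.cast_zero, zero_rpow hδ.ne', mul_zero, le_refl]
  set M := N / 2
  have hNpos : (0 : ℝ) < N := by exact_mod_cast hN
  have hMN : (M : ℝ) ≤ N / 2 := by
    rw [le_div_iff₀ two_pos]; exact_mod_cast Nat.div_mul_le_self N 2
  have hNM : (N : ℝ) / 2 ≤ M + 1 := by
    rw [div_le_iff₀ two_pos]; exact_mod_cast (by omega : N ≤ (M + 1) * 2)
  have head : ∑ n ∈ upTo A M, (n : ℝ) ^ (-a) ≤ D * 2 ^ (-δ) * (N : ℝ) ^ δ :=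
    calc ∑ n ∈ upTo A M, (n : ℝ) ^ (-a) ≤ D * (M : ℝ) ^ δ := ih M (Nat.div_lt_self hN one_lt_two)
      _ ≤ D * ((N : ℝ) / 2) ^ δ := by gcongr
      _ = D * 2 ^ (-δ) * (N : ℝ) ^ δ := by
        rw [div_rpow hNpos.le zero_le_two, rpow_neg zero_le_two]; ring
  have tail : ∑ n ∈ upTo A N \ upTo A M, (n : ℝ) ^ (-a) ≤ 2 ^ a * K * (N : ℝ) ^ δ :=
    calc ∑ n ∈ upTo A N \ upTo A M, (n : ℝ) ^ (-a)
        ≤ #(upTo A N) * ((M : ℝ) + 1) ^ (-a) := sum_upTo_sdiff_rpow_neg_le ha M N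
      _ ≤ K * (N : ℝ) ^ (δ + a) * ((N : ℝ) / 2) ^ (-a) :=
        mul_le_mul (hcount N) (rpow_le_rpow_of_nonpos (by positivity) hNM (by linarith))
          (by positivity) (by positivity)
      _ = 2 ^ a * K * (N : ℝ) ^ δ := by
        rw [div_rpow hNpos.le zero_le_two, rpow_neg zero_le_two, rpow_add hNpos,
          rpow_neg hNpos.le]
        field_simp
  rw [← sum_sdiff (upTo_mono (Nat.div_le_self N 2))]
  calc _ ≤ 2 ^ a * K * (N : ℝ) ^ δ + D * 2 ^ (-δ) * (N : ℝ) ^ δ := add_le_add tail head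
    _ = D * (N : ℝ) ^ δ := by linear_combination (N : ℝ) ^ δ * hDfix

lemma tendsto_sum_upTo_rpow_neg_div_rpow {a γ : ℝ} (ha : 0 ≤ a) (hγ : 0 < γ)
    (hdim : upperMassDim A - a < γ) :
    Tendsto (fun N : ℕ => (∑ n ∈ upTo A N, (n : ℝ) ^ (-a)) / (N : ℝ) ^ γ) atTop (nhds 0) := by
  obtain ⟨δ, hδ, hδγ⟩ := exists_between (max_lt hγ hdim)
  obtain ⟨hδ0, hδdim⟩ := max_lt_iff.1 hδ
  obtain ⟨K, hK, hcount⟩ := exists_card_upTo_le_mul_rpow (by positivity)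
    (eventually_card_upTo_le_rpow (β := δ + a) (by linarith))
  set D := 2 ^ a * K / (1 - 2 ^ (-δ))
  have hdecay : Tendsto (fun N : ℕ => D * (N : ℝ) ^ (δ - γ)) atTop (nhds 0) := by
    simpa [neg_sub] using ((tendsto_rpow_neg_atTop (sub_pos.2 hδγ)).comp
      tendsto_natCast_atTop_atTop).const_mul D
  refine squeeze_zero' (Eventually.of_forall fun N => by positivity) ?_ hdecay
  filter_upwards [eventually_gt_atTop 0] with N hN
  have hNpos : (0 : ℝ) < N := by exact_mod_cast hN
  rw [rpow_sub hNpos, ← mul_div_assoc]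
  gcongr
  exact sum_upTo_rpow_neg_le ha hδ0 hK hcount N

lemma frequently_le_sum_upTo_rpow_neg_div_rpow {a γ : ℝ} (ha : 0 ≤ a) (hγ : 0 ≤ γ)
    (hdim : γ + a < upperMassDim A) (C : ℝ) :
    ∃ᶠ N : ℕ in atTop, C ≤ (∑ n ∈ upTo A N, (n : ℝ) ^ (-a)) / (N : ℝ) ^ γ := by
  obtain ⟨c, hc, hcdim⟩ := exists_between hdim
  have hgrowth : Tendsto (fun N : ℕ => (N : ℝ) ^ (c - a - γ)) atTop atTop :=
    (tendsto_rpow_atTop (by linarith)).comp tendsto_natCast_atTop_atTop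
  refine ((frequently_rpow_lt_card_upTo (by linarith) hcdim).and_eventually
    ((hgrowth.eventually_ge_atTop C).and (eventually_gt_atTop 0))).mono ?_
  rintro N ⟨hcard, hC, hN⟩
  have hNpos : (0 : ℝ) < N := by exact_mod_cast hN
  calc C ≤ (N : ℝ) ^ (c - a - γ) := hC
    _ = (N : ℝ) ^ c * (N : ℝ) ^ (-a) / (N : ℝ) ^ γ := by
      rw [rpow_sub hNpos, sub_eq_add_neg, rpow_add hNpos]
    _ ≤ #(upTo A N) * (N : ℝ) ^ (-a) / (N : ℝ) ^ γ := by gcongr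
    _ ≤ (∑ n ∈ upTo A N, (n : ℝ) ^ (-a)) / (N : ℝ) ^ γ := by
      gcongr; exact card_upTo_mul_rpow_neg_le_sum ha N

end

/-- with `γ̄ = max{0, dim̄_M(A) − a}`, the weighted counting
sums `N^{-γ} ∑_{n≤N} n^{-a} 1_A(n)` tend to `0` for `γ > γ̄` and have
limsup `+∞` for `0 < γ < γ̄`. -/
theorem weighted_sum_dichotomy (A : Set ℕ) (a : ℝ) (ha : a ∈ Set.Ioo (0:ℝ) 1) :
    (∀ γ : ℝ, max 0 (upperMassDim A - a) < γ →
      Tendsto (fun N : ℕ =>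
          (∑ n ∈ Finset.Icc 1 N, (n:ℝ) ^ (-a) * A.indicator (fun _ => (1:ℝ)) n) / (N:ℝ) ^ γ)
        atTop (nhds 0)) ∧
    (∀ γ : ℝ, 0 < γ → γ < max 0 (upperMassDim A - a) →
      ∀ C : ℝ, ∃ᶠ N : ℕ in atTop,
        C ≤ (∑ n ∈ Finset.Icc 1 N, (n:ℝ) ^ (-a) * A.indicator (fun _ => (1:ℝ)) n) / (N:ℝ) ^ γ) := by
  simp only [sum_Icc_mul_indicator_eq_sum_upTo]
  refine ⟨fun γ hγ => ?_, fun γ hγ0 hγ => ?_⟩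
  · obtain ⟨hγ0, hγdim⟩ := max_lt_iff.1 hγ
    exact tendsto_sum_upTo_rpow_neg_div_rpow ha.1.le hγ0 hγdim
  · have hγdim : γ < upperMassDim A - a := (lt_max_iff.1 hγ).resolve_left hγ0.not_gt
    exact frequently_le_sum_upTo_rpow_neg_div_rpow ha.1.le hγ0.le (by linarith)
end

section
/- Let A ⊆ ℕ and a ∈ (0,1), and suppose the mass dimension dim_M(A) = lim_{N→∞} log|A ∩ [1,N]| / log N exists. Set γ̄ = max{0, dim_M(A) − a}. Then for 0 < γ < γ̄, lim_{N→∞} N^{-γ} ∑_{n=1}^N n^{-a} 1_A(n) = +∞ (the limit, not just the limsup, diverges to infinity). -/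
/-!
Pick `s` with `γ + a < s < D`. Eventually `|A ∩ [1,N]| ≥ N^s`, and every term `n^{-a}` with
`n ≤ N` is at least `N^{-a}`, so the normalized sum is at least `N^{s-a-γ}`, which tends to `∞`.
-/

open Filter

theorem Real.rpow_le_of_le_log_div_log {x y s : ℝ} (hx : 1 < x) (hy : 0 ≤ y) (hs : 0 < s)
    (h : s ≤ Real.log y / Real.log x) : x ^ s ≤ y := by
  have hlogx : 0 < Real.log x := Real.log_pos hx
  have hlogy : s * Real.log x ≤ Real.log y := (le_div_iff₀ hlogx).mp h
  have hy_gt : 1 < y := (Real.log_pos_iff hy).mp ((mul_pos hs hlogx).trans_le hlogy)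
  exact (Real.rpow_le_iff_le_log (by linarith) (by linarith)).mpr hlogy

theorem eventually_rpow_le_of_tendsto_log_div_log {f : ℕ → ℝ} (hf : ∀ N, 0 ≤ f N) {D s : ℝ}
    (hD : Tendsto (fun N : ℕ => Real.log (f N) / Real.log N) atTop (nhds D))
    (hs : 0 < s) (hsD : s < D) :
    ∀ᶠ N : ℕ in atTop, (N : ℝ) ^ s ≤ f N := by
  filter_upwards [hD.eventually (eventually_ge_nhds hsD), eventually_ge_atTop 2] with N hN hN2
  exact Real.rpow_le_of_le_log_div_log (by exact_mod_cast hN2) (hf N) hs hN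

theorem ncard_inter_Icc_mul_rpow_neg_le_sum (A : Set ℕ) {a : ℝ} (ha : 0 ≤ a) (N : ℕ) :
    ((A ∩ Set.Icc 1 N).ncard : ℝ) * (N : ℝ) ^ (-a) ≤
      ∑ n ∈ Finset.Icc 1 N, (n : ℝ) ^ (-a) * A.indicator (fun _ => (1 : ℝ)) n := by
  classical
  have hcard : (A ∩ Set.Icc 1 N).ncard = ((Finset.Icc 1 N).filter (· ∈ A)).card := by
    rw [← Set.ncard_coe_finset, Finset.coe_filter]
    congr 1
    ext n
    simp only [Set.mem_inter_iff, Set.mem_Icc, Set.mem_ofPred_eq, Finset.mem_Icc]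
    tauto
  have hsum : ∑ n ∈ Finset.Icc 1 N, (n : ℝ) ^ (-a) * A.indicator (fun _ => (1 : ℝ)) n =
      ∑ n ∈ (Finset.Icc 1 N).filter (· ∈ A), (n : ℝ) ^ (-a) := by
    simp only [Finset.sum_filter, Set.indicator_apply, mul_ite, mul_one, mul_zero]
  rw [hcard, hsum, ← nsmul_eq_mul]
  refine Finset.card_nsmul_le_sum _ _ _ fun n hn => ?_
  have hn : 1 ≤ n ∧ n ≤ N := Finset.mem_Icc.mp (Finset.mem_filter.mp hn).1
  exact Real.rpow_le_rpow_of_nonpos (by exact_mod_cast hn.1) (by exact_mod_cast hn.2)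
    (neg_nonpos.mpr ha)

/-- if the mass dimension of `A` exists (the limit
`D = lim_N log|A ∩ [1,N]|/log N`), then for `0 < γ < max{0, D − a}`, the sums
`N^{-γ} ∑_{n≤N} n^{-a} 1_A(n)` diverge to `+∞` (as a limit). -/
theorem weighted_sum_diverges (A : Set ℕ) (a : ℝ) (ha : a ∈ Set.Ioo (0:ℝ) 1)
    (D : ℝ)
    (hD : Tendsto (fun N : ℕ => Real.log ((A ∩ Set.Icc 1 N).ncard : ℝ) / Real.log N)
      atTop (nhds D)) :
    ∀ γ : ℝ, 0 < γ → γ < max 0 (D - a) →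
      Tendsto (fun N : ℕ =>
          (∑ n ∈ Finset.Icc 1 N, (n:ℝ) ^ (-a) * A.indicator (fun _ => (1:ℝ)) n) / (N:ℝ) ^ γ)
        atTop atTop := by
  intro γ hγ hγD
  have hγaD : γ + a < D := by
    rcases lt_max_iff.mp hγD with h | h <;> linarith
  obtain ⟨s, hs, hsD⟩ := exists_between hγaD
  have hcount := eventually_rpow_le_of_tendsto_log_div_log (fun N => Nat.cast_nonneg _) hD
    (by linarith [ha.1]) hsD
  refine tendsto_atTop_mono' atTop ?_
    ((tendsto_rpow_atTop (sub_pos.mpr hs)).comp tendsto_natCast_atTop_atTop)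
  filter_upwards [hcount, eventually_ge_atTop 1] with N hN hN1
  have hN0 : (0 : ℝ) < N := by exact_mod_cast hN1
  calc (N : ℝ) ^ (s - (γ + a)) = (N : ℝ) ^ s * (N : ℝ) ^ (-a) / (N : ℝ) ^ γ := by
        rw [← Real.rpow_add hN0, ← Real.rpow_sub hN0]
        ring_nf
    _ ≤ ((A ∩ Set.Icc 1 N).ncard : ℝ) * (N : ℝ) ^ (-a) / (N : ℝ) ^ γ := by gcongr
    _ ≤ _ := by gcongr; exact ncard_inter_Icc_mul_rpow_neg_le_sum A ha.1.le N
end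

section
/- Let a ∈ (0,1), let (u_n) be a lacunary sequence of positive reals (u_{n+1}/u_n ≥ ρ for some ρ > 1) with u_1 ≥ 1, and (I_n) intervals in [0,1] with λ(I_n) = n^{-a}. Define Λ_y = {n ∈ ℕ : frac(u_n y) ∈ I_n}. If A ⊆ ℕ satisfies dim̄_M(A) < a, then for Lebesgue almost every y ∈ [0,1], the mass dimension of A ∩ Λ_y exists and equals 0. -/
/-!
Choose `d` with `dim̄_M(A) < d < a`. Then `|A ∩ [1,N]| ≤ N^d` for large `N`, so the `k`-th element
of `A` is at least `k^(1/d)` and `∑_{n ∈ A} n^(-a) < ∞`. As `u_n ≥ 1`, the set of `y ∈ [0,1]` with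
`frac(u_n y) ∈ I_n` is covered by `⌊u_n⌋ + 1` intervals of length `λ(I_n) / u_n`, so it has measure
at most `2 λ(I_n)`. By Borel–Cantelli, for almost every `y` the set `A ∩ Λ_y` is finite, and the
counting function of a finite set is eventually constant.
-/

open MeasureTheory Filter

open Set Topology

lemma ncard_inter_Icc_le (A : Set ℕ) (N : ℕ) : (A ∩ Icc 1 N).ncard ≤ N := by
  calc (A ∩ Icc 1 N).ncard ≤ (Icc 1 N).ncard := ncard_le_ncard inter_subset_right (finite_Icc 1 N)
    _ = N := by simp [← Finset.coe_Icc, ncard_coe_finset]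

lemma ncard_inter_Icc_lt_of_mem {A : Set ℕ} {m n : ℕ} (hn : n ∈ A) (hmn : m < n) :
    (A ∩ Icc 1 m).ncard < (A ∩ Icc 1 n).ncard := by
  have hsub : A ∩ Icc 1 m ⊆ A ∩ Icc 1 n := inter_subset_inter_right A (Icc_subset_Icc_right hmn.le)
  refine ncard_lt_ncard ((ssubset_iff_of_subset hsub).2 ⟨n, ⟨hn, by omega, le_rfl⟩, ?_⟩)
    ((finite_Icc 1 n).subset inter_subset_right)
  exact fun h => hmn.not_ge h.2.2

lemma eventually_ncard_inter_Icc_le_rpow {A : Set ℕ} {d : ℝ} (hd : upperMassDim A < d) :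
    ∀ᶠ N : ℕ in atTop, ((A ∩ Icc 1 N).ncard : ℝ) ≤ (N : ℝ) ^ d := by
  have hle_one : ∀ N : ℕ, Real.log ((A ∩ Icc 1 N).ncard : ℝ) / Real.log N ≤ 1 := fun N => by
    refine div_le_one_of_le₀ ?_ (Real.log_natCast_nonneg N)
    rcases (A ∩ Icc 1 N).ncard.eq_zero_or_pos with h0 | h0
    · simpa [h0] using Real.log_natCast_nonneg N
    · exact Real.log_le_log (by exact_mod_cast h0) (by exact_mod_cast ncard_inter_Icc_le A N)
  have hbdd := isBoundedUnder_of_eventually_le (f := atTop) (.of_forall hle_one)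
  filter_upwards [eventually_lt_of_limsup_lt hd hbdd, eventually_ge_atTop 2] with N hN hN2
  have hlog : 0 < Real.log N := Real.log_pos (by exact_mod_cast hN2)
  rcases (A ∩ Icc 1 N).ncard.eq_zero_or_pos with h0 | h0
  · rw [h0, Nat.cast_zero]
    positivity
  · exact ((Real.lt_rpow_iff_log_lt (by exact_mod_cast h0) (by positivity)).2
      ((div_lt_iff₀ hlog).1 hN)).le

lemma summable_indicator_rpow_neg {A : Set ℕ} {a d : ℝ} (hd : 0 < d) (hda : d < a)
    (hA : ∀ᶠ N : ℕ in atTop, ((A ∩ Icc 1 N).ncard : ℝ) ≤ (N : ℝ) ^ d) :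
    Summable (A.indicator fun n : ℕ => (n : ℝ) ^ (-a)) := by
  obtain ⟨N₀, hN₀⟩ := eventually_atTop.1 hA
  set count : ℕ → ℕ := fun n => (A ∩ Icc 1 n).ncard
  set S : Set ℕ := {n | n ∈ A ∧ N₀ ≤ n}
  have hinj : InjOn count S := by
    exact StrictMonoOn.injOn fun m _ n hn hmn => ncard_inter_Icc_lt_of_mem hn.1 hmn
  have hsumm : Summable (S.indicator fun n => (count n : ℝ) ^ (-(a / d))) := by
    rw [← summable_subtype_iff_indicator]
    refine (Real.summable_nat_rpow.2 ?_).comp_injective hinj.injective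
    rw [neg_lt_neg_iff, lt_div_iff₀ hd]
    linarith
  refine hsumm.of_norm_bounded_eventually_nat ?_
  filter_upwards [eventually_ge_atTop N₀, eventually_ge_atTop 1] with n hn hn1
  by_cases hnA : n ∈ A
  · rw [indicator_of_mem hnA, indicator_of_mem (show n ∈ S from ⟨hnA, hn⟩),
      Real.norm_of_nonneg (by positivity)]
    have hcount : (0 : ℝ) < count n := by
      exact_mod_cast (ncard_pos ((finite_Icc 1 n).subset inter_subset_right)).2
        ⟨n, hnA, hn1, le_rfl⟩
    calc (n : ℝ) ^ (-a) = ((n : ℝ) ^ d) ^ (-(a / d)) := by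
          rw [← Real.rpow_mul (Nat.cast_nonneg n)]
          field_simp
      _ ≤ (count n : ℝ) ^ (-(a / d)) :=
          Real.rpow_le_rpow_of_nonpos hcount (hN₀ n hn)
            (neg_nonpos.2 (div_nonneg (hd.trans hda).le hd.le))
  · rw [indicator_of_notMem hnA, norm_zero]
    exact indicator_nonneg (fun n _ => by positivity) n

lemma tendsto_log_ncard_inter_Icc_div_log_of_finite {B : Set ℕ} (hB : B.Finite) :
    Tendsto (fun N : ℕ => Real.log ((B ∩ Icc 1 N).ncard : ℝ) / Real.log N) atTop (𝓝 0) := by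
  obtain ⟨M, hM⟩ := hB.bddAbove
  have hconst : ∀ᶠ N in atTop, B ∩ Icc 1 N = B ∩ Ici 1 := by
    filter_upwards [eventually_ge_atTop M] with N hN
    ext n
    simp only [mem_inter_iff, mem_Icc, mem_Ici]
    exact ⟨fun h => ⟨h.1, h.2.1⟩, fun h => ⟨h.1, h.2, (hM h.1).trans hN⟩⟩
  refine ((tendsto_const_nhds (x := Real.log ((B ∩ Ici 1).ncard : ℝ))).div_atTop
    (Real.tendsto_log_atTop.comp tendsto_natCast_atTop_atTop)).congr' ?_
  filter_upwards [hconst] with N hN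
  simp only [Function.comp_apply, hN]

lemma volume_fract_mul_mem_Icc_le {c : ℝ} (hc : 1 ≤ c) (p q : ℝ) :
    volume (Icc (0 : ℝ) 1 ∩ {y | Int.fract (c * y) ∈ Icc p q}) ≤ 2 * volume (Icc p q) := by
  rcases lt_or_ge q p with hqp | hpq
  · simp [Icc_eq_empty_of_lt hqp]
  have hc0 : 0 < c := one_pos.trans_le hc
  set K := ⌊c⌋₊
  have hcover : Icc (0 : ℝ) 1 ∩ {y | Int.fract (c * y) ∈ Icc p q}
      ⊆ ⋃ k ∈ Finset.range (K + 1), Icc ((p + k) / c) ((q + k) / c) := by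
    rintro y ⟨⟨hy0, hy1⟩, hp, hq⟩
    have hcy : 0 ≤ c * y := by positivity
    refine mem_biUnion (x := ⌊c * y⌋₊) (Finset.mem_range_succ_iff.2
      (Nat.floor_le_floor (by nlinarith))) ⟨?_, ?_⟩
    all_goals
      rw [Int.fract, ← Int.natCast_floor_eq_floor hcy, Int.cast_natCast] at hp hq
    · rw [div_le_iff₀ hc0]; linarith
    · rw [le_div_iff₀ hc0]; linarith
  have hK : (K + 1 : ℝ) * ((q - p) / c) ≤ 2 * (q - p) := by
    have : (K + 1 : ℝ) ≤ 2 * c := by linarith [Nat.floor_le hc0.le (a := c)]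
    rw [← mul_div_assoc, div_le_iff₀ hc0]
    nlinarith
  calc volume (Icc (0 : ℝ) 1 ∩ {y | Int.fract (c * y) ∈ Icc p q})
      ≤ ∑ k ∈ Finset.range (K + 1), volume (Icc ((p + k) / c) ((q + k) / c)) :=
        (measure_mono hcover).trans (measure_biUnion_finset_le _ _)
    _ = ∑ k ∈ Finset.range (K + 1), ENNReal.ofReal ((q - p) / c) :=
        Finset.sum_congr rfl fun k _ => by rw [Real.volume_Icc]; ring_nf
    _ = ENNReal.ofReal ((K + 1 : ℕ) • ((q - p) / c)) := by
        rw [Finset.sum_const, Finset.card_range, ENNReal.ofReal_nsmul]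
    _ ≤ ENNReal.ofReal (2 * (q - p)) := ENNReal.ofReal_le_ofReal (by simpa using hK)
    _ = 2 * volume (Icc p q) := by
        rw [Real.volume_Icc, ENNReal.ofReal_mul zero_le_two, ENNReal.ofReal_ofNat]

lemma one_le_of_one_le_ratio {u : ℕ → ℝ} {ρ : ℝ} (hρ : 1 ≤ ρ) (hu1 : 1 ≤ u 1)
    (hlac : ∀ n : ℕ, 1 ≤ n → u (n + 1) / u n ≥ ρ) {n : ℕ} (hn : 1 ≤ n) : 1 ≤ u n := by
  induction n, hn using Nat.le_induction with
  | base => exact hu1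
  | succ n hn ih =>
    have h := hlac n hn
    rw [ge_iff_le, le_div_iff₀ (one_pos.trans_le ih)] at h
    nlinarith

lemma ae_finite_setOf_fract_mul_mem {A : Set ℕ} {u : ℕ → ℝ} (hu : ∀ n ∈ A, 1 ≤ u n)
    {I : ℕ → Set ℝ} (hI : ∀ n ∈ A, ∃ p q : ℝ, I n = Icc p q)
    (hsum : ∑' n, A.indicator (fun n => volume (I n)) n ≠ ⊤) :
    ∀ᵐ y ∂(volume.restrict (Icc (0 : ℝ) 1)), {n | n ∈ A ∧ Int.fract (u n * y) ∈ I n}.Finite := by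
  set s : ℕ → Set ℝ := fun n => {y | n ∈ A ∧ Int.fract (u n * y) ∈ I n}
  have hs : ∀ n, volume.restrict (Icc (0 : ℝ) 1) (s n)
      ≤ 2 * A.indicator (fun n => volume (I n)) n := by
    intro n
    by_cases hn : n ∈ A
    · obtain ⟨p, q, hpq⟩ := hI n hn
      rw [Measure.restrict_apply' measurableSet_Icc, indicator_of_mem hn, hpq, inter_comm]
      refine (measure_mono fun y hy => ?_).trans (volume_fract_mul_mem_Icc_le (hu n hn) p q)
      exact ⟨hy.1, hpq ▸ hy.2.2⟩
    · simp [s, hn]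
  have hBC := ae_eventually_notMem (μ := volume.restrict (Icc (0 : ℝ) 1)) (s := s)
    (ne_top_of_le_ne_top (ENNReal.mul_ne_top ENNReal.ofNat_ne_top hsum)
      ((ENNReal.tsum_le_tsum hs).trans_eq ENNReal.tsum_mul_left))
  filter_upwards [hBC] with y hy
  rw [← Nat.cofinite_eq_atTop, eventually_cofinite] at hy
  simpa [s] using hy

theorem transversality_small_general (a : ℝ) (ha : a ∈ Set.Ioo (0:ℝ) 1)
    (u : ℕ → ℝ) (hu1 : 1 ≤ u 1)
    (ρ : ℝ) (hρ : 1 < ρ)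
    (hlac : ∀ n : ℕ, 1 ≤ n → u (n + 1) / u n ≥ ρ)
    (I : ℕ → Set ℝ)
    (hIint : ∀ n : ℕ, 1 ≤ n → ∃ p q : ℝ, I n = Set.Icc p q)
    (hIvol : ∀ n : ℕ, 1 ≤ n → volume (I n) = ENNReal.ofReal ((n:ℝ) ^ (-a)))
    (A : Set ℕ) (hA : upperMassDim A < a) :
    ∀ᵐ y ∂(volume.restrict (Set.Icc (0:ℝ) 1)),
      Tendsto (fun N : ℕ =>
          Real.log (((A ∩ {n : ℕ | Int.fract (u n * y) ∈ I n} ∩ Set.Icc 1 N).ncard : ℝ))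
            / Real.log N)
        atTop (nhds 0) := by
  obtain ⟨d, hAd, hd0, hda⟩ : ∃ d, upperMassDim A < d ∧ 0 < d ∧ d < a := by
    obtain ⟨d, hd, hda⟩ := exists_between (max_lt hA ha.1)
    exact ⟨d, (le_max_left _ _).trans_lt hd, (le_max_right _ _).trans_lt hd, hda⟩
  have hsumm := summable_indicator_rpow_neg hd0 hda (eventually_ncard_inter_Icc_le_rpow hAd)
  have hle : ∀ n, (A ∩ Ici 1).indicator (fun n => volume (I n)) n
      ≤ ENNReal.ofReal (A.indicator (fun n : ℕ => (n : ℝ) ^ (-a)) n) := fun n => by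
    by_cases hn : n ∈ A ∩ Ici 1
    · rw [indicator_of_mem hn, indicator_of_mem hn.1, hIvol n hn.2]
    · rw [indicator_of_notMem hn]
      exact zero_le
  have hvol : ∑' n, (A ∩ Ici 1).indicator (fun n => volume (I n)) n ≠ ⊤ := by
    refine ne_top_of_le_ne_top ?_ (ENNReal.tsum_le_tsum hle)
    rw [← ENNReal.ofReal_tsum_of_nonneg
      (fun n => indicator_nonneg (fun n _ => by positivity) n) hsumm]
    exact ENNReal.ofReal_ne_top
  filter_upwards [ae_finite_setOf_fract_mul_mem
    (fun n hn => one_le_of_one_le_ratio hρ.le hu1 hlac hn.2) (fun n hn => hIint n hn.2) hvol]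
    with y hy
  refine tendsto_log_ncard_inter_Icc_div_log_of_finite ((hy.insert 0).subset ?_)
  rintro n ⟨hnA, hnI⟩
  rcases n.eq_zero_or_pos with rfl | hn
  · exact mem_insert 0 _
  · exact mem_insert_of_mem 0 ⟨⟨hnA, hn⟩, hnI⟩

/-- transversality, small dimension case: for a lacunary sequence
`(u_n)` and `A` with `dim̄_M(A) < a`, for a.e. `y ∈ [0,1]` the mass dimension of
`A ∩ Λ_y` exists and equals `0`, i.e. `log|A ∩ Λ_y ∩ [1,N]| / log N → 0`. -/
theorem transversality_small (a : ℝ) (ha : a ∈ Set.Ioo (0:ℝ) 1)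
    (u : ℕ → ℝ) (hu : ∀ n, 0 < u n) (hu1 : 1 ≤ u 1)
    (ρ : ℝ) (hρ : 1 < ρ)
    (hlac : ∀ n : ℕ, 1 ≤ n → u (n + 1) / u n ≥ ρ)
    (I : ℕ → Set ℝ) (hIsub : ∀ n, I n ⊆ Set.Icc (0:ℝ) 1)
    (hIint : ∀ n : ℕ, 1 ≤ n → ∃ p q : ℝ, I n = Set.Icc p q)
    (hIvol : ∀ n : ℕ, 1 ≤ n → volume (I n) = ENNReal.ofReal ((n:ℝ) ^ (-a)))
    (A : Set ℕ) (hA : upperMassDim A < a) :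
    ∀ᵐ y ∂(volume.restrict (Set.Icc (0:ℝ) 1)),
      Tendsto (fun N : ℕ =>
          Real.log (((A ∩ {n : ℕ | Int.fract (u n * y) ∈ I n} ∩ Set.Icc 1 N).ncard : ℝ))
            / Real.log N)
        atTop (nhds 0) :=
  transversality_small_general a ha u hu1 ρ hρ hlac I hIint hIvol A hA
end

section
/- Let a ∈ (0,1), let u ≥ 1 be real and I ⊆ [0,1] an interval with λ(I) = ε. Then the set u^{-1}(I) = {y ∈ [0,1] : frac(u y) ∈ I} satisfies |λ(u^{-1}(I)) − ε| ≤ ε/u. Moreover, for u < v and intervals I, J ⊆ [0,1] with λ(I) = ε, λ(J) = η, one has |λ(u^{-1}(I) ∩ v^{-1}(J)) − εη| ≤ η(u/v + ε/u + 1/u + 1/v) (up to an absolute constant factor). -/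
/-!
On each branch `[i/u, (i+1)/u)` of `y ↦ frac (u y)` the preimage of `[p, q] ⊆ [0, 1]` is an
interval of length `(q - p)/u`. The branches meeting `[α, β]` have `⌊uα⌋ ≤ i ≤ ⌊uβ⌋`, and those
with `⌈uα⌉ ≤ i < ⌊uβ⌋` lie inside `[α, β)`; counting them bounds the measure of the preimage from
both sides. For two scales `u < v` the same count is run for Lebesgue measure restricted to
`v⁻¹(J)`: each `u`-piece, of length `ε/u`, contains `vε/u ± 2` pieces of the `v`-partition,
each of measure `η/v`.
-/

open MeasureTheory Set

section FractPreimage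

variable {u p q α β y : ℝ}

lemma mem_Icc_floor_add_div_of_fract_mem_Icc (hu : 0 < u) (h : Int.fract (u * y) ∈ Icc p q) :
    y ∈ Icc ((⌊u * y⌋ + p) / u) ((⌊u * y⌋ + q) / u) := by
  rw [Int.fract] at h
  constructor
  · rw [div_le_iff₀' hu]; linarith [h.1]
  · rw [le_div_iff₀' hu]; linarith [h.2]

lemma mul_mem_Ico_of_mem_Ico_add_div (hu : 0 < u) {x : ℝ}
    (h : y ∈ Ico ((x + p) / u) ((x + q) / u)) : u * y ∈ Ico (x + p) (x + q) := by
  rwa [mem_Ico, div_le_iff₀' hu, lt_div_iff₀' hu] at h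

lemma floor_mul_eq_of_mem_Ico_add_div (hu : 0 < u) (hp : 0 ≤ p) (hq : q ≤ 1) {i : ℤ}
    (h : y ∈ Ico ((i + p) / u) ((i + q) / u)) : ⌊u * y⌋ = i := by
  obtain ⟨h₁, h₂⟩ := mul_mem_Ico_of_mem_Ico_add_div hu h
  rw [Int.floor_eq_iff]
  constructor <;> linarith

lemma fract_mul_mem_Icc_of_mem_Ico_add_div (hu : 0 < u) (hp : 0 ≤ p) (hq : q ≤ 1) {i : ℤ}
    (h : y ∈ Ico ((i + p) / u) ((i + q) / u)) : Int.fract (u * y) ∈ Icc p q := by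
  obtain ⟨h₁, h₂⟩ := mul_mem_Ico_of_mem_Ico_add_div hu h
  rw [Int.fract, floor_mul_eq_of_mem_Ico_add_div hu hp hq h]
  constructor <;> linarith

lemma pairwiseDisjoint_Ico_add_div (hu : 0 < u) (hp : 0 ≤ p) (hq : q ≤ 1) (s : Set ℤ) :
    s.PairwiseDisjoint fun i : ℤ ↦ Ico ((i + p) / u) ((i + q) / u) := fun i _ j _ hij ↦
  disjoint_left.2 fun _ hi hj ↦ hij <| by
    rw [← floor_mul_eq_of_mem_Ico_add_div hu hp hq hi, floor_mul_eq_of_mem_Ico_add_div hu hp hq hj]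

lemma sep_fract_mem_Icc_subset_biUnion (hu : 0 < u) :
    {y ∈ Icc α β | Int.fract (u * y) ∈ Icc p q} ⊆
      ⋃ i ∈ Finset.Ico ⌊u * α⌋ (⌊u * β⌋ + 1), Icc ((i + p) / u) ((i + q) / u) := by
  rintro y ⟨⟨hαy, hyβ⟩, hf⟩
  refine mem_iUnion₂.2 ⟨⌊u * y⌋, ?_, mem_Icc_floor_add_div_of_fract_mem_Icc hu hf⟩
  rw [Finset.mem_Ico, Int.lt_add_one_iff]
  exact ⟨Int.floor_mono (by gcongr), Int.floor_mono (by gcongr)⟩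

lemma biUnion_subset_sep_fract_mem_Icc (hu : 0 < u) (hp : 0 ≤ p) (hq : q ≤ 1) :
    ⋃ i ∈ Finset.Ico ⌈u * α⌉ ⌊u * β⌋, Ico ((i + p) / u) ((i + q) / u) ⊆
      {y ∈ Ico α β | Int.fract (u * y) ∈ Icc p q} := by
  simp only [iUnion_subset_iff, Finset.mem_Ico]
  intro i ⟨hαi, hiβ⟩ y hy
  obtain ⟨h₁, h₂⟩ := mul_mem_Ico_of_mem_Ico_add_div hu hy
  have hαi' : u * α ≤ i := (Int.le_ceil _).trans (by exact_mod_cast hαi)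
  have hiβ' : (i : ℝ) + 1 ≤ u * β :=
    (show (i : ℝ) + 1 ≤ ⌊u * β⌋ by exact_mod_cast hiβ).trans (Int.floor_le _)
  exact ⟨⟨le_of_mul_le_mul_left (by linarith) hu, lt_of_mul_lt_mul_left (by linarith) hu.le⟩,
    fract_mul_mem_Icc_of_mem_Ico_add_div hu hp hq hy⟩

lemma volume_real_Icc_add_div (hu : 0 < u) (hpq : p ≤ q) (x : ℝ) :
    volume.real (Icc ((x + p) / u) ((x + q) / u)) = (q - p) / u := by
  rw [Real.volume_real_Icc_of_le (by gcongr), ← sub_div, add_sub_add_left_eq_sub]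

lemma volume_real_Ico_add_div (hu : 0 < u) (hpq : p ≤ q) (x : ℝ) :
    volume.real (Ico ((x + p) / u) ((x + q) / u)) = (q - p) / u := by
  rw [Real.volume_real_Ico_of_le (by gcongr), ← sub_div, add_sub_add_left_eq_sub]

variable {μ : Measure ℝ} [IsFiniteMeasureOnCompacts μ]

lemma measureReal_sep_Ico_le_sep_Icc (P : ℝ → Prop) :
    μ.real {y ∈ Ico α β | P y} ≤ μ.real {y ∈ Icc α β | P y} :=
  measureReal_mono (inter_subset_inter_left _ Ico_subset_Icc_self)
    (measure_ne_top_of_subset (sep_subset _ _) measure_Icc_lt_top.ne)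

lemma measureReal_sep_fract_mem_Icc_le_sum (hu : 0 < u) :
    μ.real {y ∈ Icc α β | Int.fract (u * y) ∈ Icc p q} ≤
      ∑ i ∈ Finset.Ico ⌊u * α⌋ (⌊u * β⌋ + 1), μ.real (Icc ((i + p) / u) ((i + q) / u)) :=
  (measureReal_mono (sep_fract_mem_Icc_subset_biUnion hu) <| ne_of_lt <|
      (measure_biUnion_finset_le _ _).trans_lt <|
        ENNReal.sum_lt_top.2 fun _ _ ↦ measure_Icc_lt_top).trans
    (measureReal_biUnion_finset_le _ _)

lemma sum_le_measureReal_sep_fract_mem_Icc (hu : 0 < u) (hp : 0 ≤ p) (hq : q ≤ 1) :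
    ∑ i ∈ Finset.Ico ⌈u * α⌉ ⌊u * β⌋, μ.real (Ico ((i + p) / u) ((i + q) / u)) ≤
      μ.real {y ∈ Ico α β | Int.fract (u * y) ∈ Icc p q} := by
  rw [← measureReal_biUnion_finset (pairwiseDisjoint_Ico_add_div hu hp hq _)
    (fun _ _ ↦ measurableSet_Ico) fun _ _ ↦ measure_Ico_lt_top.ne]
  exact measureReal_mono (biUnion_subset_sep_fract_mem_Icc hu hp hq)
    (measure_ne_top_of_subset (sep_subset _ _) measure_Ico_lt_top.ne)

lemma volume_real_sep_fract_mem_Icc_le (hu : 0 < u) (hpq : p ≤ q) (hαβ : α ≤ β) :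
    volume.real {y ∈ Icc α β | Int.fract (u * y) ∈ Icc p q} ≤
      (⌊u * β⌋ - ⌊u * α⌋ + 1) * ((q - p) / u) := by
  have hfloor : ⌊u * α⌋ ≤ ⌊u * β⌋ + 1 :=
    (Int.floor_mono (by gcongr)).trans (Int.le_add_one le_rfl)
  have hcard : ((Finset.Ico ⌊u * α⌋ (⌊u * β⌋ + 1)).card : ℝ) = ⌊u * β⌋ - ⌊u * α⌋ + 1 := by
    have := Int.card_Ico_of_le _ _ hfloor
    exact_mod_cast this.trans (by ring)
  refine (measureReal_sep_fract_mem_Icc_le_sum hu).trans_eq ?_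
  simp_rw [volume_real_Icc_add_div hu hpq, Finset.sum_const, nsmul_eq_mul, hcard]

lemma le_volume_real_sep_fract_mem_Icc (hu : 0 < u) (hp : 0 ≤ p) (hpq : p ≤ q) (hq : q ≤ 1) :
    (⌊u * β⌋ - ⌈u * α⌉) * ((q - p) / u) ≤
      volume.real {y ∈ Ico α β | Int.fract (u * y) ∈ Icc p q} := by
  refine le_trans ?_ (sum_le_measureReal_sep_fract_mem_Icc hu hp hq)
  simp_rw [volume_real_Ico_add_div hu hpq, Finset.sum_const, nsmul_eq_mul, Int.card_Ico]
  gcongr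
  exact_mod_cast Int.self_le_toNat _

theorem abs_volume_real_sep_fract_mem_Icc_sub_le (hu : 1 ≤ u) (hp : 0 ≤ p) (hpq : p ≤ q)
    (hq : q ≤ 1) :
    |volume.real {y ∈ Icc (0 : ℝ) 1 | Int.fract (u * y) ∈ Icc p q} - (q - p)| ≤ (q - p) / u := by
  have hu₀ : 0 < u := by linarith
  have upper := volume_real_sep_fract_mem_Icc_le (α := 0) (β := 1) hu₀ hpq zero_le_one
  have lower := (le_volume_real_sep_fract_mem_Icc (α := 0) (β := 1) hu₀ hp hpq hq).trans
    (measureReal_sep_Ico_le_sep_Icc _)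
  simp only [mul_zero, mul_one, Int.floor_zero, Int.ceil_zero, Int.cast_zero, sub_zero]
    at upper lower
  have hε : q - p = u * ((q - p) / u) := by field_simp
  have hε₀ : 0 ≤ (q - p) / u := div_nonneg (sub_nonneg.2 hpq) hu₀.le
  rw [abs_le]
  constructor <;> nlinarith [Int.floor_le u, Int.lt_floor_add_one u]

end FractPreimage

section TwoScales

variable {u v p q r s : ℝ}

lemma measurableSet_fract_mul_mem_Icc (v r s : ℝ) :
    MeasurableSet {y : ℝ | Int.fract (v * y) ∈ Icc r s} :=
  measurableSet_Icc.preimage (measurable_fract.comp (measurable_const_mul v))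

lemma restrict_real_sep_fract_mem_Icc_le (hu : 0 < u) (hv : 0 < v) (hpq : p ≤ q) (hrs : r ≤ s) :
    (volume.restrict {y | Int.fract (v * y) ∈ Icc r s}).real
        {y ∈ Icc (0 : ℝ) 1 | Int.fract (u * y) ∈ Icc p q} ≤
      (u + 1) * ((v * (q - p) / u + 2) * ((s - r) / v)) := by
  have hpiece (i : ℤ) : (volume.restrict {y | Int.fract (v * y) ∈ Icc r s}).real
      (Icc ((i + p) / u) ((i + q) / u)) ≤ (v * (q - p) / u + 2) * ((s - r) / v) := by
    rw [measureReal_restrict_apply' (measurableSet_fract_mul_mem_Icc v r s)]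
    refine (volume_real_sep_fract_mem_Icc_le hv hrs (by gcongr)).trans ?_
    have hlen : v * ((i + q) / u) - v * ((i + p) / u) = v * (q - p) / u := by ring
    gcongr ?_ * _
    linarith [Int.floor_le (v * ((i + q) / u)), Int.lt_floor_add_one (v * ((i + p) / u))]
  have hcard : ((Finset.Ico 0 (⌊u⌋ + 1)).card : ℝ) = ⌊u⌋ + 1 := by
    have := Int.card_Ico_of_le _ _ (show 0 ≤ ⌊u⌋ + 1 by have := Int.floor_nonneg.2 hu.le; omega)
    exact_mod_cast this.trans (by ring)
  calc _ ≤ ∑ i ∈ Finset.Ico 0 (⌊u⌋ + 1), (volume.restrict {y | Int.fract (v * y) ∈ Icc r s}).real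
          (Icc ((i + p) / u) ((i + q) / u)) := by
        simpa using measureReal_sep_fract_mem_Icc_le_sum
          (μ := volume.restrict {y | Int.fract (v * y) ∈ Icc r s}) (α := 0) (β := 1)
          (p := p) (q := q) hu
    _ ≤ ∑ _i ∈ Finset.Ico 0 (⌊u⌋ + 1), (v * (q - p) / u + 2) * ((s - r) / v) :=
        Finset.sum_le_sum fun i _ ↦ hpiece i
    _ ≤ (u + 1) * ((v * (q - p) / u + 2) * ((s - r) / v)) := by
        rw [Finset.sum_const, nsmul_eq_mul, hcard]
        have : 0 ≤ v * (q - p) / u := div_nonneg (mul_nonneg hv.le (sub_nonneg.2 hpq)) hu.le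
        gcongr
        exact Int.floor_le u

lemma le_restrict_real_sep_fract_mem_Icc (hu : 1 ≤ u) (hv : 0 < v) (hp : 0 ≤ p) (hq : q ≤ 1)
    (hr : 0 ≤ r) (hrs : r ≤ s) (hs : s ≤ 1) :
    (u - 1) * ((v * (q - p) / u - 2) * ((s - r) / v)) ≤
      (volume.restrict {y | Int.fract (v * y) ∈ Icc r s}).real
        {y ∈ Icc (0 : ℝ) 1 | Int.fract (u * y) ∈ Icc p q} := by
  have hu₀ : 0 < u := by linarith
  set X := (v * (q - p) / u - 2) * ((s - r) / v)
  have hpiece (i : ℤ) : max X 0 ≤ (volume.restrict {y | Int.fract (v * y) ∈ Icc r s}).real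
      (Ico ((i + p) / u) ((i + q) / u)) := by
    refine max_le ?_ measureReal_nonneg
    rw [measureReal_restrict_apply' (measurableSet_fract_mul_mem_Icc v r s)]
    refine le_trans ?_ (le_volume_real_sep_fract_mem_Icc hv hr hrs hs)
    have hlen : v * ((i + q) / u) - v * ((i + p) / u) = v * (q - p) / u := by ring
    gcongr ?_ * _
    linarith [Int.floor_le (v * ((i + q) / u)), Int.lt_floor_add_one (v * ((i + q) / u)),
      Int.ceil_lt_add_one (v * ((i + p) / u))]
  have hcard : ((Finset.Ico 0 ⌊u⌋).card : ℝ) = ⌊u⌋ := by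
    exact_mod_cast (Int.card_Ico_of_le _ _ (Int.floor_nonneg.2 hu₀.le)).trans (sub_zero _)
  calc (u - 1) * X ≤ (u - 1) * max X 0 :=
        mul_le_mul_of_nonneg_left (le_max_left _ _) (by linarith)
    _ ≤ ⌊u⌋ * max X 0 :=
        mul_le_mul_of_nonneg_right (by linarith [Int.sub_one_lt_floor u]) (le_max_right _ _)
    _ = ∑ _i ∈ Finset.Ico 0 ⌊u⌋, max X 0 := by rw [Finset.sum_const, nsmul_eq_mul, hcard]
    _ ≤ ∑ i ∈ Finset.Ico 0 ⌊u⌋, (volume.restrict {y | Int.fract (v * y) ∈ Icc r s}).real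
          (Ico ((i + p) / u) ((i + q) / u)) := Finset.sum_le_sum fun i _ ↦ hpiece i
    _ ≤ _ := by
        simpa using sum_le_measureReal_sep_fract_mem_Icc
          (μ := volume.restrict {y | Int.fract (v * y) ∈ Icc r s}) (α := 0) (β := 1) hu₀ hp hq
    _ ≤ _ := measureReal_sep_Ico_le_sep_Icc _

theorem abs_volume_real_sep_fract_mem_Icc_and_sub_le (hu : 1 ≤ u) (huv : u < v) (hp : 0 ≤ p)
    (hpq : p ≤ q) (hq : q ≤ 1) (hr : 0 ≤ r) (hrs : r ≤ s) (hs : s ≤ 1) :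
    |volume.real {y ∈ Icc (0 : ℝ) 1 | Int.fract (u * y) ∈ Icc p q ∧ Int.fract (v * y) ∈ Icc r s} -
        (q - p) * (s - r)| ≤ 2 * ((s - r) * (u / v + (q - p) / u + 1 / u + 1 / v)) := by
  have hu₀ : 0 < u := by linarith
  have hv : 0 < v := by linarith
  have hS : volume.real {y ∈ Icc (0 : ℝ) 1 |
        Int.fract (u * y) ∈ Icc p q ∧ Int.fract (v * y) ∈ Icc r s} =
      (volume.restrict {y | Int.fract (v * y) ∈ Icc r s}).real
        {y ∈ Icc (0 : ℝ) 1 | Int.fract (u * y) ∈ Icc p q} := by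
    rw [measureReal_restrict_apply' (measurableSet_fract_mul_mem_Icc v r s)]
    exact congrArg _ (ext fun _ ↦ and_assoc.symm)
  have upper := restrict_real_sep_fract_mem_Icc_le hu₀ hv hpq hrs
  have lower := le_restrict_real_sep_fract_mem_Icc hu hv hp hq hr hrs hs
  rw [← hS] at upper lower
  have hupper : (u + 1) * ((v * (q - p) / u + 2) * ((s - r) / v)) =
      (q - p) * (s - r) + (s - r) * ((q - p) / u + 2 * (u / v) + 2 * (1 / v)) := by
    field_simp; ring
  have hlower : (u - 1) * ((v * (q - p) / u - 2) * ((s - r) / v)) =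
      (q - p) * (s - r) - (s - r) * ((q - p) / u + 2 * (u / v) - 2 * (1 / v)) := by
    field_simp; ring
  have hη : 0 ≤ s - r := sub_nonneg.2 hrs
  rw [abs_le]
  constructor <;> linarith [mul_nonneg hη (div_nonneg (sub_nonneg.2 hpq) hu₀.le),
    mul_nonneg hη (one_div_nonneg.2 hu₀.le), mul_nonneg hη (one_div_nonneg.2 hv.le),
    mul_nonneg hη (div_nonneg hu₀.le hv.le)]

end TwoScales

lemma eq_empty_or_exists_Icc_of_volume_eq {I : Set ℝ} {ε : ℝ} (hε : 0 ≤ ε) (hI : I ⊆ Icc 0 1)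
    (hIcc : ∃ p q : ℝ, I = Icc p q) (hvol : volume I = ENNReal.ofReal ε) :
    I = ∅ ∧ ε = 0 ∨ ∃ p q, 0 ≤ p ∧ p ≤ q ∧ q ≤ 1 ∧ I = Icc p q ∧ ε = q - p := by
  obtain ⟨p, q, rfl⟩ := hIcc
  rcases lt_or_ge q p with hqp | hpq
  · rw [Icc_eq_empty_of_lt hqp, measure_empty, eq_comm, ENNReal.ofReal_eq_zero] at hvol
    exact .inl ⟨Icc_eq_empty_of_lt hqp, le_antisymm hvol hε⟩
  · rw [Real.volume_Icc, ENNReal.ofReal_eq_ofReal_iff (sub_nonneg.2 hpq) hε] at hvol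
    exact .inr ⟨p, q, (hI (left_mem_Icc.2 hpq)).1, hpq, (hI (right_mem_Icc.2 hpq)).2, rfl,
      hvol.symm⟩

theorem preimage_measure_estimates_general :
    (∀ (u ε : ℝ) (I : Set ℝ), 1 ≤ u → 0 ≤ ε → I ⊆ Set.Icc (0:ℝ) 1 →
      (∃ p q : ℝ, I = Set.Icc p q) → volume I = ENNReal.ofReal ε →
      |(volume {y ∈ Set.Icc (0:ℝ) 1 | Int.fract (u * y) ∈ I}).toReal - ε| ≤ ε / u) ∧
    (∃ C : ℝ, 0 < C ∧ ∀ (u v ε η : ℝ) (I J : Set ℝ), 1 ≤ u → u < v →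
      0 ≤ ε → 0 ≤ η →
      I ⊆ Set.Icc (0:ℝ) 1 → J ⊆ Set.Icc (0:ℝ) 1 →
      (∃ p q : ℝ, I = Set.Icc p q) → (∃ p q : ℝ, J = Set.Icc p q) →
      volume I = ENNReal.ofReal ε → volume J = ENNReal.ofReal η →
      |(volume {y ∈ Set.Icc (0:ℝ) 1 |
          Int.fract (u * y) ∈ I ∧ Int.fract (v * y) ∈ J}).toReal - ε * η|
        ≤ C * (η * (u / v + ε / u + 1 / u + 1 / v))) := by
  refine ⟨fun u ε I hu hε hI hIcc hvol ↦ ?_, 2, two_pos,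
    fun u v ε η I J hu huv hε hη hI hJ hIcc hJcc hvolI hvolJ ↦ ?_⟩
  · rcases eq_empty_or_exists_Icc_of_volume_eq hε hI hIcc hvol with
      ⟨rfl, rfl⟩ | ⟨p, q, hp, hpq, hq, rfl, rfl⟩
    · simp
    · exact abs_volume_real_sep_fract_mem_Icc_sub_le hu hp hpq hq
  · rcases eq_empty_or_exists_Icc_of_volume_eq hε hI hIcc hvolI with
      ⟨rfl, rfl⟩ | ⟨p, q, hp, hpq, hq, rfl, rfl⟩
    · have : 0 < u := by linarith
      have : 0 < v := by linarith
      simp only [mem_empty_iff_false, false_and, and_false, ofPred_false, measure_empty,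
        ENNReal.toReal_zero, zero_mul, sub_self, abs_zero]
      positivity
    rcases eq_empty_or_exists_Icc_of_volume_eq hη hJ hJcc hvolJ with
      ⟨rfl, rfl⟩ | ⟨r, s, hr, hrs, hs, rfl, rfl⟩
    · simp
    · exact abs_volume_real_sep_fract_mem_Icc_and_sub_le hu huv hp hpq hq hr hrs hs

/-- for `u ≥ 1` and an interval `I ⊆ [0,1]` with `λ(I) = ε`,
the set `u^{-1}(I) = {y ∈ [0,1] : frac(u y) ∈ I}` satisfies
`|λ(u^{-1}(I)) − ε| ≤ ε/u`; moreover, up to an absolute constant, for `u < v`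
and intervals `I, J` of measures `ε, η`,
`|λ(u^{-1}(I) ∩ v^{-1}(J)) − εη| ≤ C η (u/v + ε/u + 1/u + 1/v)`. -/
theorem preimage_measure_estimates (a : ℝ) (ha : a ∈ Set.Ioo (0:ℝ) 1) :
    (∀ (u ε : ℝ) (I : Set ℝ), 1 ≤ u → 0 ≤ ε → I ⊆ Set.Icc (0:ℝ) 1 →
      (∃ p q : ℝ, I = Set.Icc p q) → volume I = ENNReal.ofReal ε →
      |(volume {y ∈ Set.Icc (0:ℝ) 1 | Int.fract (u * y) ∈ I}).toReal - ε| ≤ ε / u) ∧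
    (∃ C : ℝ, 0 < C ∧ ∀ (u v ε η : ℝ) (I J : Set ℝ), 1 ≤ u → u < v →
      0 ≤ ε → 0 ≤ η →
      I ⊆ Set.Icc (0:ℝ) 1 → J ⊆ Set.Icc (0:ℝ) 1 →
      (∃ p q : ℝ, I = Set.Icc p q) → (∃ p q : ℝ, J = Set.Icc p q) →
      volume I = ENNReal.ofReal ε → volume J = ENNReal.ofReal η →
      |(volume {y ∈ Set.Icc (0:ℝ) 1 |
          Int.fract (u * y) ∈ I ∧ Int.fract (v * y) ∈ J}).toReal - ε * η|
        ≤ C * (η * (u / v + ε / u + 1 / u + 1 / v))) :=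
  preimage_measure_estimates_general
end
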